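/- arXiv:math/0506177 — 4 statements merged into one kernel-verified Lean document; each statement's English description precedes it below -/
import Mathlib

section
/- For an n×n max-plus matrix A, the Kleene star A* = I ⊕ A ⊕ A² ⊕ ... (entrywise supremum of all max-plus powers, with I the identity) exists (all entries finite or -∞, i.e., the supremum is not +∞) if and only if the maximal cycle mean λ(A) is at most 0 (the max-plus unit). -/
namespace MaxPlus

/-- Max-plus (tropical) matrix product over `EReal` (`⊥ = -∞` is the max-plus zero,
`+` is the max-plus multiplication, `⊔`/`⨆` is the max-plus addition). -/
noncomputable def mmul {n : ℕ} (A B : Matrix (Fin n) (Fin n) EReal) : Matrix (Fin n) (Fin n) EReal :=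
  fun i j => ⨆ k, A i k + B k j

/-- The max-plus identity matrix. -/
noncomputable def mId (n : ℕ) : Matrix (Fin n) (Fin n) EReal := fun i j => if i = j then 0 else ⊥

/-- Max-plus matrix powers. -/
noncomputable def mpow {n : ℕ} (A : Matrix (Fin n) (Fin n) EReal) : ℕ → Matrix (Fin n) (Fin n) EReal
  | 0 => mId n
  | m + 1 => mmul (mpow A m) A

/-- The max-plus Kleene star `A* = I ⊕ A ⊕ A² ⊕ ⋯` (entrywise supremum of all powers). -/
noncomputable def mstar {n : ℕ} (A : Matrix (Fin n) (Fin n) EReal) : Matrix (Fin n) (Fin n) EReal :=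
  fun i j => ⨆ m, mpow A m i j

/-- Weight of the cycle determined by the list `l = [i₁,…,i_k]`,
namely `A i₁ i₂ + ⋯ + A i_k i₁`. -/
noncomputable def cycleWeight {n : ℕ} (A : Matrix (Fin n) (Fin n) EReal) (l : List (Fin n)) : EReal :=
  ((l.zip (l.rotate 1)).map fun p => A p.1 p.2).sum

/-- A nonempty list of pairwise distinct indices, representing an elementary cycle. -/
def IsCycle {n : ℕ} (l : List (Fin n)) : Prop := l ≠ [] ∧ l.Nodup

/-- All elementary cycles have nonpositive weight, i.e. the maximal cycle mean `λ(A) ≤ 0`. -/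
def CycleBound {n : ℕ} (A : Matrix (Fin n) (Fin n) EReal) : Prop :=
  ∀ l : List (Fin n), IsCycle l → cycleWeight A l ≤ 0

/-- A definite matrix: maximal cycle mean `0` and zero (max-plus unit) diagonal.
(The diagonal entries give cycles of weight `0`, so `λ(A) = 0` is equivalent to
`CycleBound A` here.) -/
def Definite {n : ℕ} (A : Matrix (Fin n) (Fin n) EReal) : Prop :=
  CycleBound A ∧ ∀ i, A i i = 0

/-- Max-plus action of a matrix on a vector: `(A ⊙ x)_i = max_j (A_{ij} + x_j)`. -/
noncomputable def mapVec {n : ℕ} (A : Matrix (Fin n) (Fin n) EReal) (x : Fin n → EReal) :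
    Fin n → EReal :=
  fun i => ⨆ j, A i j + x j

/-- The max-plus eigenspace of `A` for the eigenvalue `0`. -/
def eig {n : ℕ} (A : Matrix (Fin n) (Fin n) EReal) : Set (Fin n → EReal) :=
  {x | mapVec A x = x}

/-- The max-plus column span of a matrix. -/
def mspan {n : ℕ} (A : Matrix (Fin n) (Fin n) EReal) : Set (Fin n → EReal) :=
  {y | ∃ α : Fin n → EReal, y = fun i => ⨆ j, α j + A i j}


/-!
Entries of `A^m` are maximal weights of walks with `m` edges. If a cycle through `a` has
positive weight `w`, going once more around it raises `(A^m)_{aa}` by `w`, so `A*_{aa} = +∞`.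
Conversely, if no elementary cycle has positive weight, cutting an elementary cycle out of a walk
does not decrease its weight, so every walk weighs at most as much as a walk without repeated
vertices; such a walk has fewer than `n` edges, each of weight at most `max A_{ij} < +∞`.
-/

theorem _root_.List.exists_nodup_loop_of_not_nodup {α : Type*} :
    ∀ {l : List α}, ¬ l.Nodup → ∃ u a v w, l = u ++ a :: v ++ a :: w ∧ (a :: v).Nodup
  | [], h => absurd List.nodup_nil h
  | x :: t, h => by
    by_cases ht : t.Nodup
    · have hx : x ∈ t := by simpa [ht] using h
      obtain ⟨s, u, rfl⟩ := List.append_of_mem hx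
      have hxs : (x :: (s ++ u)).Nodup := List.nodup_middle.1 ht
      exact ⟨[], x, s, u, rfl, hxs.sublist ((List.sublist_append_left s u).cons_cons x)⟩
    · obtain ⟨u, a, v, w, rfl, hv⟩ := List.exists_nodup_loop_of_not_nodup ht
      exact ⟨x :: u, a, v, w, rfl, hv⟩

theorem _root_.EReal.iSup_eq_top_of_forall_add_le {ι : Sort*} {f : ι → EReal} {w : EReal}
    (hf : ∃ i, f i ≠ ⊥) (hw : 0 < w) (h : ∀ i, ∃ j, f i + w ≤ f j) : ⨆ i, f i = ⊤ := by
  by_contra hx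
  obtain ⟨i₀, hi₀⟩ := hf
  have hxb : ⨆ i, f i ≠ ⊥ := ne_bot_of_le_ne_bot hi₀ (le_iSup f i₀)
  have hle_sub : ∀ y, y + w ≤ ⨆ i, f i ↔ y ≤ (⨆ i, f i) - w := fun y =>
    (EReal.le_sub_iff_add_le (Or.inl (ne_bot_of_gt hw)) (Or.inr hx)).symm
  have hx_le : (⨆ i, f i) + w ≤ ⨆ i, f i := by
    refine (hle_sub _).2 (iSup_le fun i => ?_)
    obtain ⟨j, hj⟩ := h i
    exact (hle_sub _).1 (hj.trans (le_iSup f j))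
  obtain ⟨r, hr⟩ : ∃ r : ℝ, ⨆ i, f i = r := ⟨_, (EReal.coe_toReal hx hxb).symm⟩
  rw [hr] at hx_le
  have hlt := EReal.add_lt_add_left_coe hw r
  rw [add_zero] at hlt
  exact hlt.not_ge hx_le

lemma exists_nonneg_real_bound_of_ne_top {ι : Type*} [Finite ι] (A : Matrix ι ι EReal)
    (hA : ∀ i j, A i j ≠ ⊤) : ∃ C : ℝ, 0 ≤ C ∧ ∀ i j, A i j ≤ C := by
  obtain ⟨C, hC⟩ := Finite.bddAbove_range fun p : ι × ι => (A p.1 p.2).toReal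
  refine ⟨max C 0, le_max_right _ _, fun i j => (EReal.le_coe_toReal (hA i j)).trans ?_⟩
  exact_mod_cast (hC ⟨(i, j), rfl⟩).trans (le_max_left _ _)

section Walk

variable {ι M : Type*} [AddMonoid M] (A : Matrix ι ι M)

def walkWeight : List ι → M
  | i :: j :: t => A i j + walkWeight (j :: t)
  | _ => 0

@[simp] lemma walkWeight_nil : walkWeight A [] = 0 := rfl

@[simp] lemma walkWeight_singleton (i : ι) : walkWeight A [i] = 0 := rfl

@[simp] lemma walkWeight_cons_cons (i j : ι) (t : List ι) :
    walkWeight A (i :: j :: t) = A i j + walkWeight A (j :: t) := rfl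

lemma walkWeight_append_cons (u : List ι) (a : ι) (v : List ι) :
    walkWeight A (u ++ a :: v) = walkWeight A (u ++ [a]) + walkWeight A (a :: v) := by
  induction u with
  | nil => simp
  | cons x u ih =>
    cases u with
    | nil => simp
    | cons y u => simp_all [add_assoc]

lemma sum_map_zip_cons_append_eq_walkWeight (x y : ι) (t : List ι) :
    (((x :: t).zip (t ++ [y])).map fun p => A p.1 p.2).sum = walkWeight A (x :: t ++ [y]) := by
  induction t generalizing x with
  | nil => simp
  | cons c t ih => simp [ih]

end Walk

lemma walkWeight_cons_le_length_mul {ι : Type*} (A : Matrix ι ι EReal) {C : ℝ}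
    (hC : ∀ i j, A i j ≤ C) (i : ι) (l : List ι) :
    walkWeight A (i :: l) ≤ ((l.length * C : ℝ) : EReal) := by
  induction l generalizing i with
  | nil => simp
  | cons j l ih =>
    calc walkWeight A (i :: j :: l) = A i j + walkWeight A (j :: l) := rfl
      _ ≤ (C : EReal) + ((l.length * C : ℝ) : EReal) := add_le_add (hC i j) (ih j)
      _ = (((j :: l).length * C : ℝ) : EReal) := by
        rw [← EReal.coe_add, List.length_cons, Nat.cast_succ, add_one_mul, add_comm]

section FinMatrix

variable {n : ℕ} (A : Matrix (Fin n) (Fin n) EReal)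

lemma cycleWeight_cons (a : Fin n) (t : List (Fin n)) :
    cycleWeight A (a :: t) = walkWeight A (a :: t ++ [a]) := by
  rw [cycleWeight, List.rotate_cons_succ, List.rotate_zero,
    sum_map_zip_cons_append_eq_walkWeight]

lemma mpow_add_walkWeight_le (m : ℕ) (i j : Fin n) (l : List (Fin n)) :
    mpow A m i j + walkWeight A (j :: l) ≤
      mpow A (m + l.length) i ((j :: l).getLast (List.cons_ne_nil _ _)) := by
  induction l generalizing m j with
  | nil => simp
  | cons k l ih =>
    have hstep : mpow A m i j + A j k ≤ mpow A (m + 1) i k :=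
      le_iSup (fun c => mpow A m i c + A c k) j
    calc mpow A m i j + walkWeight A (j :: k :: l)
        = (mpow A m i j + A j k) + walkWeight A (k :: l) := by simp [add_assoc]
      _ ≤ mpow A (m + 1) i k + walkWeight A (k :: l) := by gcongr
      _ ≤ _ := ih (m + 1) k
      _ = _ := by
        rw [List.getLast_cons_cons, List.length_cons, Nat.add_right_comm, Nat.add_assoc]

lemma exists_walkWeight_ge_mpow_succ (m : ℕ) (i j : Fin n) :
    ∃ t, mpow A (m + 1) i j ≤ walkWeight A (i :: t ++ [j]) := by
  induction m generalizing j with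
  | zero =>
    refine ⟨[], iSup_le fun k => ?_⟩
    by_cases hik : i = k
    · subst hik; simp [mpow, mId]
    · simp [mpow, mId, hik]
  | succ m ih =>
    have : Nonempty (Fin n) := ⟨i⟩
    obtain ⟨k, hk⟩ := exists_eq_ciSup_of_finite (f := fun c => mpow A (m + 1) i c + A c j)
    obtain ⟨t, ht⟩ := ih k
    refine ⟨t ++ [k], ?_⟩
    calc mpow A (m + 1 + 1) i j = mpow A (m + 1) i k + A k j := hk.symm
      _ ≤ walkWeight A (i :: t ++ [k]) + walkWeight A [k, j] := by
          rw [walkWeight_cons_cons, walkWeight_singleton, add_zero]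
          gcongr
      _ = walkWeight A (i :: (t ++ [k]) ++ [j]) := by
          rw [← walkWeight_append_cons]
          simp

lemma mstar_self_eq_top_of_cycleWeight_pos {a : Fin n} {t : List (Fin n)}
    (h : 0 < cycleWeight A (a :: t)) : mstar A a a = ⊤ :=
  EReal.iSup_eq_top_of_forall_add_le ⟨0, by simp [mpow, mId]⟩ h fun m =>
    ⟨m + (t.length + 1), by
      simpa [cycleWeight_cons] using mpow_add_walkWeight_le A m a a (t ++ [a])⟩

lemma walkWeight_le_of_cycleBound (hcb : CycleBound A) {C : ℝ} (hC0 : 0 ≤ C)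
    (hC : ∀ i j, A i j ≤ C) (l : List (Fin n)) : walkWeight A l ≤ ((n * C : ℝ) : EReal) := by
  induction h : l.length using Nat.strong_induction_on generalizing l with
  | _ k ih =>
  by_cases hl : l.Nodup
  · rcases l with _ | ⟨i, t⟩
    · rw [walkWeight_nil]
      exact_mod_cast mul_nonneg n.cast_nonneg hC0
    · have ht : t.length < n := by simpa using hl.length_le_card
      refine (walkWeight_cons_le_length_mul A hC i t).trans ?_
      exact_mod_cast mul_le_mul_of_nonneg_right (by exact_mod_cast ht.le) hC0
  · obtain ⟨u, a, v, w, rfl, hv⟩ := List.exists_nodup_loop_of_not_nodup hl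
    have hloop : walkWeight A (a :: v ++ [a]) ≤ 0 :=
      cycleWeight_cons A a v ▸ hcb _ ⟨List.cons_ne_nil _ _, hv⟩
    calc walkWeight A (u ++ a :: v ++ a :: w)
        = walkWeight A (u ++ [a]) + walkWeight A (a :: v ++ [a]) + walkWeight A (a :: w) := by
          rw [walkWeight_append_cons A (u ++ a :: v), List.append_assoc, List.cons_append,
            walkWeight_append_cons A u a]
      _ ≤ walkWeight A (u ++ [a]) + 0 + walkWeight A (a :: w) := by gcongr
      _ = walkWeight A (u ++ a :: w) := by rw [add_zero, ← walkWeight_append_cons]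
      _ ≤ _ := ih _ (by simp at h ⊢; omega) _ rfl

lemma mstar_le_of_walkWeight_le {B : EReal} (h0 : 0 ≤ B) (hB : ∀ l, walkWeight A l ≤ B)
    (i j : Fin n) : mstar A i j ≤ B :=
  iSup_le fun m => by
    rcases m with _ | m
    · change (if i = j then 0 else ⊥) ≤ B
      split_ifs <;> simp [h0]
    · obtain ⟨t, ht⟩ := exists_walkWeight_ge_mpow_succ A m i j
      exact ht.trans (hB _)

end FinMatrix

/-- For a matrix with entries in `R_max = ℝ ∪ {-∞}` (no `+∞` entries), the Kleene star
`A* = I ⊕ A ⊕ A² ⊕ ⋯` exists (no entry of the entrywise supremum is `+∞`) iff the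
maximal cycle mean `λ(A)` is at most `0`. -/
theorem mstar_exists_iff_cycleBound {n : ℕ} (A : Matrix (Fin n) (Fin n) EReal)
    (hA : ∀ i j, A i j ≠ ⊤) :
    (∀ i j, mstar A i j ≠ ⊤) ↔ CycleBound A := by
  constructor
  · rintro hstar l ⟨hne, -⟩
    obtain ⟨a, t, rfl⟩ := List.exists_cons_of_ne_nil hne
    by_contra! hpos
    exact hstar a a (mstar_self_eq_top_of_cycleWeight_pos A hpos)
  · intro hcb i j
    obtain ⟨C, hC0, hC⟩ := exists_nonneg_real_bound_of_ne_top A hA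
    have hstar := mstar_le_of_walkWeight_le A (by exact_mod_cast mul_nonneg n.cast_nonneg hC0)
      (walkWeight_le_of_cycleBound A hcb hC0 hC) i j
    exact ne_top_of_le_ne_top (EReal.coe_ne_top _) hstar

end MaxPlus
end

section
/- Let A and B be n×n max-plus matrices with λ(A) ≤ 0 and λ(B) ≤ 0. Then the column spans of A* and B* coincide (span(A*) = span(B*)) if and only if A* = B*. -/
namespace MaxPlus

/-! Since `A*` is idempotent, its column span is exactly its set of fixed points
`{x | A* ⊙ x = x}`. So if `span B* ⊆ span A*`, every column of `B*` is fixed by `A*`, and as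
`B*` has a nonnegative diagonal, `A*ᵢⱼ ≤ A*ᵢⱼ + B*ⱼⱼ ≤ (A* ⊙ B*_{·j})ᵢ = B*ᵢⱼ`. -/

theorem _root_.EReal.add_iSup {ι : Sort*} (a : EReal) (f : ι → EReal) :
    a + ⨆ i, f i = ⨆ i, a + f i := by
  rcases eq_or_ne a ⊥ with rfl | ha
  · simp only [EReal.bot_add, iSup_bot]
  rcases eq_or_ne (⨆ i, f i) ⊥ with hf | hf
  · rw [iSup_eq_bot] at hf
    simp [hf]
  -- `a + ·` fails to be continuous only at `⊥` (when `a = ⊤`) and at `⊤` (when `a = ⊥`)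
  exact Monotone.map_iSup_of_continuousAt
    ((EReal.continuousAt_add (.inr hf) (.inl ha)).comp
      (continuous_const.prodMk continuous_id).continuousAt)
    (fun _ _ h => add_le_add_right h a) (EReal.add_bot a)

theorem _root_.EReal.iSup_add {ι : Sort*} (a : EReal) (f : ι → EReal) :
    (⨆ i, f i) + a = ⨆ i, f i + a := by
  simp only [add_comm _ a, EReal.add_iSup]

section

variable {n : ℕ}

theorem mmul_apply_eq_mapVec (M N : Matrix (Fin n) (Fin n) EReal) (i j : Fin n) :
    mmul M N i j = mapVec M (fun k => N k j) i :=
  rfl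

theorem mapVec_mmul (M N : Matrix (Fin n) (Fin n) EReal) (x : Fin n → EReal) :
    mapVec (mmul M N) x = mapVec M (mapVec N x) := by
  funext i
  simp only [mapVec, mmul, EReal.iSup_add, EReal.add_iSup, add_assoc]
  exact iSup_comm

theorem mmul_assoc (A B C : Matrix (Fin n) (Fin n) EReal) :
    mmul (mmul A B) C = mmul A (mmul B C) := by
  funext i j
  simp only [mmul_apply_eq_mapVec, mapVec_mmul]

theorem mmul_mId (A : Matrix (Fin n) (Fin n) EReal) : mmul A (mId n) = A := by
  funext i j
  refine le_antisymm (iSup_le fun k => ?_) (le_iSup_of_le j (by simp [mId]))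
  by_cases h : k = j <;> simp [mId, h]

theorem mpow_add (A : Matrix (Fin n) (Fin n) EReal) (p q : ℕ) :
    mpow A (p + q) = mmul (mpow A p) (mpow A q) := by
  induction q with
  | zero => exact (mmul_mId _).symm
  | succ q ih => rw [← Nat.add_assoc, mpow, mpow, ih, mmul_assoc]

theorem mId_le_mstar (A : Matrix (Fin n) (Fin n) EReal) (i j : Fin n) :
    mId n i j ≤ mstar A i j :=
  le_iSup (fun m => mpow A m i j) 0

theorem mstar_diag_nonneg (A : Matrix (Fin n) (Fin n) EReal) (j : Fin n) :
    0 ≤ mstar A j j := by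
  simpa [mId] using mId_le_mstar A j j

theorem mstar_mmul_mstar (A : Matrix (Fin n) (Fin n) EReal) :
    mmul (mstar A) (mstar A) = mstar A := by
  funext i j
  apply le_antisymm
  · simp only [mmul, mstar, EReal.iSup_add, EReal.add_iSup]
    refine iSup_le fun k => iSup_le fun q => iSup_le fun p => ?_
    have hpq : mpow A p i k + mpow A q k j ≤ mpow A (p + q) i j := by
      rw [mpow_add]
      exact le_iSup (fun k => mpow A p i k + mpow A q k j) k
    exact hpq.trans (le_iSup (fun m => mpow A m i j) (p + q))
  · calc mstar A i j ≤ mstar A i j + mstar A j j :=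
          le_add_of_nonneg_right (mstar_diag_nonneg A j)
      _ ≤ mmul (mstar A) (mstar A) i j := le_iSup (fun k => mstar A i k + mstar A k j) j

theorem mspan_eq_range_mapVec (M : Matrix (Fin n) (Fin n) EReal) :
    mspan M = Set.range (mapVec M) := by
  ext y
  simp only [mspan, Set.mem_range, Set.mem_ofPred_eq, eq_comm (a := y)]
  exact exists_congr fun α => by simp only [add_comm]; rfl

theorem col_mem_mspan (M : Matrix (Fin n) (Fin n) EReal) (j : Fin n) :
    (fun i => M i j) ∈ mspan M := by
  rw [mspan_eq_range_mapVec]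
  exact ⟨fun k => mId n k j, funext fun i => by rw [← mmul_apply_eq_mapVec, mmul_mId]⟩

theorem mspan_eq_eig_of_mmul_self {M : Matrix (Fin n) (Fin n) EReal} (hM : mmul M M = M) :
    mspan M = eig M := by
  rw [mspan_eq_range_mapVec]
  ext x
  constructor
  · rintro ⟨α, rfl⟩
    show mapVec M (mapVec M α) = mapVec M α
    rw [← mapVec_mmul, hM]
  · exact fun hx => ⟨x, hx⟩

theorem le_of_mspan_subset_of_mmul_self {M N : Matrix (Fin n) (Fin n) EReal}
    (hM : mmul M M = M) (hN : ∀ j, 0 ≤ N j j) (h : mspan N ⊆ mspan M) (i j : Fin n) :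
    M i j ≤ N i j := by
  have hfix : mapVec M (fun k => N k j) = fun k => N k j := by
    have := h (col_mem_mspan N j)
    rwa [mspan_eq_eig_of_mmul_self hM] at this
  calc M i j ≤ M i j + N j j := le_add_of_nonneg_right (hN j)
    _ ≤ mapVec M (fun k => N k j) i := le_iSup (fun k => M i k + N k j) j
    _ = N i j := congrFun hfix i

end

theorem span_mstar_eq_iff_mstar_eq_general {n : ℕ} (A B : Matrix (Fin n) (Fin n) EReal) :
    mspan (mstar A) = mspan (mstar B) ↔ mstar A = mstar B := by
  refine ⟨fun h => ?_, fun h => h ▸ rfl⟩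
  funext i j
  exact le_antisymm
    (le_of_mspan_subset_of_mmul_self (mstar_mmul_mstar A) (mstar_diag_nonneg B) h.ge i j)
    (le_of_mspan_subset_of_mmul_self (mstar_mmul_mstar B) (mstar_diag_nonneg A) h.le i j)

/-- For matrices `A, B` with `λ(A) ≤ 0` and `λ(B) ≤ 0`, the column spans of the Kleene
stars coincide iff the Kleene stars themselves coincide. -/
theorem span_mstar_eq_iff_mstar_eq {n : ℕ} (A B : Matrix (Fin n) (Fin n) EReal)
    (hA : ∀ i j, A i j ≠ ⊤) (hB : ∀ i j, B i j ≠ ⊤)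
    (hbA : CycleBound A) (hbB : CycleBound B) :
    mspan (mstar A) = mspan (mstar B) ↔ mstar A = mstar B :=
  span_mstar_eq_iff_mstar_eq_general A B

end MaxPlus
end

section
/- If A is a definite max-plus matrix whose column span coincides with its eigenspace for eigenvalue 0 (span(A) = eig(A)), then A = A*. -/
namespace MaxPlus

/-- If a definite matrix's column span coincides with its eigenspace for eigenvalue `0`,
then the matrix equals its Kleene star. -/
theorem span_eq_eig_imp_mstar_eq {n : ℕ} (A : Matrix (Fin n) (Fin n) EReal)
    (hd : Definite A) (h : mspan A = eig A) :
    A = mstar A := by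
  obtain ⟨-, hdiag⟩ := hd
  -- every column of A lies in the span, hence in the eigenspace
  have hcol : ∀ j, mapVec A (fun i => A i j) = fun i => A i j := by
    intro j
    have hmem : (fun i => A i j) ∈ mspan A := by
      refine ⟨fun k => if k = j then (0 : EReal) else ⊥, ?_⟩
      funext i
      refine le_antisymm (le_iSup_iff.mpr fun b hb => ?_) (iSup_le fun k => ?_)
      · have := hb j; simpa using this
      · by_cases hk : k = j
        · subst hk; simp
        · simp [hk]
    rw [h] at hmem
    exact hmem
  -- hence A ⊙ A = A
  have hAA : mmul A A = A := by
    funext i j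
    have := congrFun (hcol j) i
    simpa [mapVec, mmul] using this
  -- A¹ = A
  have h1 : mpow A 1 = A := by
    funext i j
    show (⨆ k, mId n i k + A k j) = A i j
    refine le_antisymm (iSup_le fun k => ?_) (le_iSup_iff.mpr fun b hb => ?_)
    · by_cases hk : i = k
      · subst hk; simp [mId]
      · simp [mId, hk]
    · have := hb i; simpa [mId] using this
  -- all positive powers equal A
  have hpow : ∀ m, mpow A (m + 1) = A := by
    intro m
    induction m with
    | zero => exact h1
    | succ m ih => show mmul (mpow A (m + 1)) A = A; rw [ih, hAA]
  funext i j
  refine le_antisymm (le_iSup_iff.mpr fun b hb => ?_) (iSup_le fun m => ?_)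
  · have := hb 1; rwa [h1] at this
  · cases m with
    | zero =>
      show mId n i j ≤ A i j
      by_cases hij : i = j
      · subst hij; simp [mId, hdiag i]
      · simp [mId, hij]
    | succ m => rw [hpow m]

end MaxPlus
end

section
/- Let A be a definite max-plus matrix, σ a permutation maximizing Σ_i A_{iσ(i)} (a maximal permutation), and A' the definite form of A with respect to σ, defined by A'_{ij} = A_{iσ(j)} - A_{jσ(j)}. Then A' is again definite and eig(A') = eig(A). -/
namespace MaxPlus

/-!
The identity competes with `σ`, so the permanent is `≥ 0` and no `A i (σ i)` is `⊥`; each cycle of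
`σ` is a cycle of `A`, hence has weight `≤ 0`, which makes every `A i (σ i)` finite. Replacing `σ` by
the identity on one of its cycles shows that every `σ`-cycle has weight exactly `0`.

A cycle `π` of `A'` has weight `∑ A i (σ (π i)) - ∑ A i (σ i) ≤ 0` on its support, by maximality of
`σ` against `σ * π`. An eigenvector `x` of `A` satisfies `A j (σ j) + x (σ j) ≤ x j`, and one of `A'`
satisfies `A' j (σ⁻¹ j) + x (σ⁻¹ j) ≤ x j`, the same relation read along `σ⁻¹`. Around zero-weight
cycles these inequalities are equalities; then `A' i j + x j = A i (σ j) + x (σ j)`, so the two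
max-plus products of `x` agree after reindexing by `σ`.
-/

open Finset Equiv

lemma _root_.Equiv.Perm.SameCycle.mem_of_mapsTo {ι : Type*} [Finite ι] {τ : Perm ι} {i j : ι}
    {S : Set ι} (hS : Set.MapsTo τ S S) (h : τ.SameCycle i j) (hi : i ∈ S) : j ∈ S := by
  obtain ⟨k, rfl⟩ := h.exists_nat_pow_eq
  rw [← Perm.iterate_eq_pow]
  exact hS.iterate k hi

section Orbit

variable {ι : Type*} [Fintype ι] [DecidableEq ι]

def _root_.Equiv.Perm.orbitFinset (τ : Perm ι) (j : ι) : Finset ι := {i | τ.SameCycle j i}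

variable {τ : Perm ι} {i j : ι}

@[simp]
lemma _root_.Equiv.Perm.mem_orbitFinset : i ∈ τ.orbitFinset j ↔ τ.SameCycle j i := by
  simp [Perm.orbitFinset]

lemma _root_.Equiv.Perm.orbitFinset_inv : τ⁻¹.orbitFinset j = τ.orbitFinset j := by
  ext; simp [Perm.sameCycle_inv]

lemma _root_.Equiv.Perm.sum_orbitFinset_comp {M : Type*} [AddCommMonoid M] (f : ι → M) :
    ∑ i ∈ τ.orbitFinset j, f (τ i) = ∑ i ∈ τ.orbitFinset j, f i := by
  calc ∑ i ∈ τ.orbitFinset j, f (τ i) = ∑ i ∈ τ.orbitFinset j, f (τ.cycleOf j i) :=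
        sum_congr rfl fun i hi => by rw [(Perm.mem_orbitFinset.mp hi).cycleOf_apply]
    _ = ∑ i ∈ τ.orbitFinset j, f i := (τ.cycleOf j).sum_comp _ f fun i hi => by
        by_contra hij
        exact hi (Perm.cycleOf_apply_of_not_sameCycle (by simpa using hij))

end Orbit

section Propagation

variable {ι : Type*} [Fintype ι] [DecidableEq ι] {τ : Perm ι}

/-- Along a `τ`-cycle, `x` is either constantly `⊥`, constantly `⊤`, or real; in the real case the
slacks `x j - r j - x (τ j) ≥ 0` sum to minus the cycle weight, so they all vanish. -/
lemma add_apply_eq_of_add_apply_le (r : ι → ℝ) (x : ι → EReal)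
    (hle : ∀ j, (r j : EReal) + x (τ j) ≤ x j)
    (hsum : ∀ j, 0 ≤ ∑ i ∈ τ.orbitFinset j, r i) (j : ι) :
    (r j : EReal) + x (τ j) = x j := by
  set O := τ.orbitFinset j
  have hjO : j ∈ O := Perm.mem_orbitFinset.mpr (Perm.SameCycle.refl τ j)
  have hτO : ∀ {m}, m ∈ O → τ m ∈ O := fun hm =>
    Perm.mem_orbitFinset.mpr (Perm.sameCycle_apply_right.mpr (Perm.mem_orbitFinset.mp hm))
  by_cases hbot : ∃ i ∈ O, x i = ⊥
  · have hbotO : ∀ m ∈ O, x m = ⊥ := by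
      obtain ⟨i, hiO, hi⟩ := hbot
      refine fun m hm => Perm.SameCycle.mem_of_mapsTo (S := {a | x a = ⊥}) (fun a ha => ?_)
        ((Perm.mem_orbitFinset.mp hiO).symm.trans (Perm.mem_orbitFinset.mp hm)) hi
      have ha : x a = ⊥ := ha
      simpa [ha] using hle a
    rw [hbotO j hjO, hbotO _ (hτO hjO), EReal.add_bot]
  by_cases htop : ∃ i ∈ O, x i = ⊤
  · have htopO : ∀ m ∈ O, x m = ⊤ := by
      obtain ⟨i, hiO, hi⟩ := htop
      refine fun m hm => Perm.SameCycle.mem_of_mapsTo (τ := τ⁻¹) (S := {a | x a = ⊤})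
        (fun a ha => ?_) (Perm.sameCycle_inv.mpr
          ((Perm.mem_orbitFinset.mp hiO).symm.trans (Perm.mem_orbitFinset.mp hm))) hi
      have ha : x a = ⊤ := ha
      simpa [ha] using hle (τ⁻¹ a)
    rw [htopO j hjO, htopO _ (hτO hjO), EReal.add_top_of_ne_bot (EReal.coe_ne_bot _)]
  push Not at hbot htop
  set y : ι → ℝ := fun m => (x m).toReal
  have hxy : ∀ m ∈ O, x m = y m := fun m hm => (EReal.coe_toReal (htop m hm) (hbot m hm)).symm
  have hleO : ∀ m ∈ O, r m + y (τ m) ≤ y m := fun m hm => by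
    have := hle m
    rwa [hxy m hm, hxy _ (hτO hm), ← EReal.coe_add, EReal.coe_le_coe_iff] at this
  have hsumO : ∑ m ∈ O, (r m + y (τ m)) = ∑ m ∈ O, y m := by
    refine le_antisymm (sum_le_sum hleO) ?_
    rw [sum_add_distrib, Perm.sum_orbitFinset_comp]
    linarith [hsum j]
  rw [hxy j hjO, hxy _ (hτO hjO), ← EReal.coe_add,
    (sum_eq_sum_iff_of_le hleO).mp hsumO j hjO]

end Propagation

@[norm_cast]
lemma _root_.EReal.coe_finset_sum {α : Type*} (s : Finset α) (f : α → ℝ) :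
    ((∑ i ∈ s, f i : ℝ) : EReal) = ∑ i ∈ s, (f i : EReal) :=
  map_sum (⟨⟨(↑), EReal.coe_zero⟩, EReal.coe_add⟩ : ℝ →+ EReal) f s

section Maximal

variable {ι : Type*} [Fintype ι] {A : Matrix ι ι EReal} {σ : Perm ι}

def IsMaximalPerm (A : Matrix ι ι EReal) (σ : Perm ι) : Prop :=
  ∀ ρ : Perm ι, ∑ i, A i (ρ i) ≤ ∑ i, A i (σ i)

lemma IsMaximalPerm.apply_ne_bot (hσ : IsMaximalPerm A σ) (hdiag : ∀ i, A i i = 0) (i : ι) :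
    A i (σ i) ≠ ⊥ := by
  classical
  intro hi
  have h := hσ 1
  rw [← add_sum_erase _ (fun i => A i (σ i)) (mem_univ i), hi, EReal.bot_add] at h
  simp [hdiag] at h

lemma IsMaximalPerm.sum_mul_apply_le [DecidableEq ι] (hσ : IsMaximalPerm A σ) {s : Finset ι}
    {r : ι → ℝ} (hr : ∀ i ∉ s, A i (σ i) = r i) {π : Perm ι} (hπ : ∀ i ∉ s, π i = i) :
    ∑ i ∈ s, A i (σ (π i)) ≤ ∑ i ∈ s, A i (σ i) := by
  have h := hσ (σ * π)
  rw [← sum_add_sum_compl s, ← sum_add_sum_compl s fun i => A i (σ i)] at h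
  have hρ : ∑ i ∈ sᶜ, A i ((σ * π) i) = ∑ i ∈ sᶜ, A i (σ i) :=
    sum_congr rfl fun i hi => by rw [Perm.mul_apply, hπ i (mem_compl.mp hi)]
  have hcompl : ∑ i ∈ sᶜ, A i (σ i) = ((∑ i ∈ sᶜ, r i : ℝ) : EReal) := by
    rw [EReal.coe_finset_sum]
    exact sum_congr rfl fun i hi => hr i (mem_compl.mp hi)
  rw [hρ, hcompl] at h
  exact (EReal.addLECancellable_coe _).add_le_add_iff_right.mp h

lemma IsMaximalPerm.sum_orbitFinset_nonneg [DecidableEq ι] (hσ : IsMaximalPerm A σ)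
    (hdiag : ∀ i, A i i = 0) {r : ι → ℝ} (hr : ∀ i, A i (σ i) = r i) (j : ι) :
    0 ≤ ∑ i ∈ σ.orbitFinset j, A i (σ i) := by
  have hπ : ∀ i, σ.SameCycle j i → σ (σ⁻¹.cycleOf j i) = i := fun i hi => by
    rw [(Perm.sameCycle_inv.mpr hi).cycleOf_apply, Perm.coe_inv, Equiv.apply_symm_apply]
  calc (0 : EReal) = ∑ i ∈ σ.orbitFinset j, A i (σ (σ⁻¹.cycleOf j i)) :=
        (sum_eq_zero fun i hi => by rw [hπ i (Perm.mem_orbitFinset.mp hi), hdiag]).symm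
    _ ≤ _ := hσ.sum_mul_apply_le (fun i _ => hr i) fun i hi =>
        Perm.cycleOf_apply_of_not_sameCycle (mt Perm.sameCycle_inv.mp (by simpa using hi))

end Maximal

section FinCycles

variable {n : ℕ} {A : Matrix (Fin n) (Fin n) EReal} {σ : Perm (Fin n)}

lemma cycleWeight_eq_sum_formPerm (A : Matrix (Fin n) (Fin n) EReal) {l : List (Fin n)}
    (hl : l.Nodup) : cycleWeight A l = ∑ i ∈ l.toFinset, A i (l.formPerm i) := by
  rw [List.sum_toFinset _ hl, cycleWeight]
  congr 1
  refine List.ext_getElem (by simp) fun k h₁ h₂ => ?_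
  simp only [List.getElem_map, List.getElem_zip, List.getElem_rotate]
  rw [List.formPerm_apply_getElem _ hl]

lemma sum_orbitFinset_le_zero (hd : Definite A) (σ : Perm (Fin n)) (j : Fin n) :
    ∑ i ∈ σ.orbitFinset j, A i (σ i) ≤ 0 := by
  by_cases hj : σ j = j
  · have horb : σ.orbitFinset j = {j} := by
      ext i
      simpa using ⟨fun h : σ.SameCycle j i => (h.eq_of_left hj).symm, fun h => h ▸ .refl σ j⟩
    rw [horb, sum_singleton, hj, hd.2]
  have hsupp : j ∈ σ.support := Perm.mem_support.mpr hj
  have horb : (σ.toList j).toFinset = σ.orbitFinset j := by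
    ext i
    simp [Perm.mem_toList_iff, hsupp]
  have h := hd.1 (σ.toList j) ⟨Perm.toList_eq_nil_iff.not.mpr (not_not.mpr hsupp),
    σ.nodup_toList j⟩
  rwa [cycleWeight_eq_sum_formPerm _ (σ.nodup_toList j), Perm.formPerm_toList, horb,
    sum_congr rfl fun i hi => congrArg (A i) (Perm.mem_orbitFinset.mp hi).cycleOf_apply] at h

lemma IsMaximalPerm.apply_ne_top (hd : Definite A) (hσ : IsMaximalPerm A σ) (i : Fin n) :
    A i (σ i) ≠ ⊤ := by
  intro hi
  have hiO : i ∈ σ.orbitFinset i := Perm.mem_orbitFinset.mpr (Perm.SameCycle.refl σ i)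
  have h := sum_orbitFinset_le_zero hd σ i
  rw [← add_sum_erase _ _ hiO, hi, EReal.top_add_of_ne_bot] at h
  · simp at h
  · exact sum_induction _ (· ≠ ⊥) (fun _ _ ha hb => EReal.add_ne_bot_iff.mpr ⟨ha, hb⟩)
      EReal.zero_ne_bot fun k _ => hσ.apply_ne_bot hd.2 k

lemma IsMaximalPerm.sum_orbitFinset_eq_zero (hd : Definite A) (hσ : IsMaximalPerm A σ)
    {r : Fin n → ℝ} (hr : ∀ i, A i (σ i) = r i) (j : Fin n) :
    ∑ i ∈ σ.orbitFinset j, r i = 0 := by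
  have h : ((∑ i ∈ σ.orbitFinset j, r i : ℝ) : EReal) = ∑ i ∈ σ.orbitFinset j, A i (σ i) := by
    push_cast
    exact sum_congr rfl fun i _ => (hr i).symm
  exact EReal.coe_eq_zero.mp (h ▸ le_antisymm (sum_orbitFinset_le_zero hd σ j)
    (hσ.sum_orbitFinset_nonneg hd.2 hr j))

end FinCycles

noncomputable def definiteForm {ι : Type*} (A : Matrix ι ι EReal) (σ : Perm ι) :
    Matrix ι ι EReal :=
  fun i j => A i (σ j) - A j (σ j)

lemma add_le_of_mem_eig {n : ℕ} {B : Matrix (Fin n) (Fin n) EReal} {x : Fin n → EReal}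
    (hx : x ∈ eig B) (i j : Fin n) : B i j + x j ≤ x i :=
  (le_iSup (fun j => B i j + x j) j).trans_eq (congrFun hx i)

section DefiniteForm

variable {n : ℕ} {A : Matrix (Fin n) (Fin n) EReal} {σ : Perm (Fin n)} {r : Fin n → ℝ}
  {x : Fin n → EReal}

lemma definiteForm_apply (hr : ∀ i, A i (σ i) = r i) (i j : Fin n) :
    definiteForm A σ i j = A i (σ j) + ((-r j : ℝ) : EReal) := by
  rw [definiteForm, hr, sub_eq_add_neg, EReal.coe_neg]

lemma definiteForm_apply_self (hr : ∀ i, A i (σ i) = r i) (i : Fin n) :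
    definiteForm A σ i i = 0 := by
  rw [definiteForm_apply hr, hr, ← EReal.coe_add, add_neg_cancel, EReal.coe_zero]

lemma cycleBound_definiteForm (hσ : IsMaximalPerm A σ) (hr : ∀ i, A i (σ i) = r i) :
    CycleBound (definiteForm A σ) := by
  rintro l ⟨-, hl⟩
  have hπ : ∀ i ∉ l.toFinset, l.formPerm i = i := fun i hi =>
    List.formPerm_apply_of_notMem (List.mem_toFinset.not.mp hi)
  have hreindex : ∑ i ∈ l.toFinset, r (l.formPerm i) = ∑ i ∈ l.toFinset, r i :=
    l.formPerm.sum_comp _ r fun i hi => by_contra fun hi' => hi (hπ i hi')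
  calc cycleWeight (definiteForm A σ) l
      = ∑ i ∈ l.toFinset, A i (σ (l.formPerm i)) + ((-∑ i ∈ l.toFinset, r i : ℝ) : EReal) := by
        rw [cycleWeight_eq_sum_formPerm _ hl, ← hreindex, ← sum_neg_distrib,
          EReal.coe_finset_sum, ← sum_add_distrib]
        exact sum_congr rfl fun i _ => definiteForm_apply hr i _
    _ ≤ ∑ i ∈ l.toFinset, A i (σ i) + ((-∑ i ∈ l.toFinset, r i : ℝ) : EReal) :=
        add_le_add_left (hσ.sum_mul_apply_le (fun i _ => hr i) hπ) _
    _ = 0 := by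
        rw [sum_congr rfl fun i _ => hr i, ← EReal.coe_finset_sum, ← EReal.coe_add,
          add_neg_cancel, EReal.coe_zero]

lemma mapVec_definiteForm (hr : ∀ i, A i (σ i) = r i) (hx : ∀ j, r j + x (σ j) = x j) :
    mapVec (definiteForm A σ) x = mapVec A x := by
  funext i
  rw [mapVec, mapVec, ← σ.iSup_comp (g := fun k => A i k + x k)]
  refine iSup_congr fun j => ?_
  rw [definiteForm_apply hr, ← hx j, add_assoc, ← add_assoc ((-r j : ℝ) : EReal),
    ← EReal.coe_add, neg_add_cancel, EReal.coe_zero, zero_add]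

lemma add_apply_eq_of_mem_eig (hr : ∀ i, A i (σ i) = r i)
    (horb : ∀ j, ∑ i ∈ σ.orbitFinset j, r i = 0) (hx : x ∈ eig A) (j : Fin n) : r j + x (σ j) = x j :=
  add_apply_eq_of_add_apply_le r x (fun j => hr j ▸ add_le_of_mem_eig hx j (σ j))
    (fun j => (horb j).ge) j

lemma add_apply_eq_of_mem_eig_definiteForm (hr : ∀ i, A i (σ i) = r i)
    (horb : ∀ j, ∑ i ∈ σ.orbitFinset j, r i = 0) (hdiag : ∀ i, A i i = 0)
    (hx : x ∈ eig (definiteForm A σ)) (j : Fin n) : r j + x (σ j) = x j := by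
  have hle : ∀ j, ((-r (σ⁻¹ j) : ℝ) : EReal) + x (σ⁻¹ j) ≤ x j := fun j => by
    have h := add_le_of_mem_eig hx j (σ⁻¹ j)
    rwa [definiteForm_apply hr, Perm.coe_inv, Equiv.apply_symm_apply, hdiag, zero_add] at h
  have hsum : ∀ j, 0 ≤ ∑ i ∈ σ⁻¹.orbitFinset j, -r (σ⁻¹ i) := fun j => by
    rw [Perm.sum_orbitFinset_comp (fun i => -r i), Perm.orbitFinset_inv, sum_neg_distrib,
      horb, neg_zero]
  have h := add_apply_eq_of_add_apply_le _ x hle hsum (σ j)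
  rw [Perm.coe_inv, Equiv.symm_apply_apply] at h
  rw [← h, ← add_assoc, ← EReal.coe_add, add_neg_cancel, EReal.coe_zero, zero_add]

lemma eig_definiteForm (hr : ∀ i, A i (σ i) = r i)
    (horb : ∀ j, ∑ i ∈ σ.orbitFinset j, r i = 0) (hdiag : ∀ i, A i i = 0) : eig (definiteForm A σ) = eig A := by
  ext x
  constructor <;> intro hx
  · change mapVec A x = x
    rw [← mapVec_definiteForm hr (add_apply_eq_of_mem_eig_definiteForm hr horb hdiag hx)]
    exact hx
  · change mapVec (definiteForm A σ) x = x
    rw [mapVec_definiteForm hr (add_apply_eq_of_mem_eig hr horb hx)]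
    exact hx

end DefiniteForm

/-- For a definite matrix `A` and a maximal permutation `σ`, the definite form
`A'_{ij} = A_{iσ(j)} - A_{jσ(j)}` is again definite and has the same eigenspace
as `A`. -/
theorem definite_form_definite_and_same_eig {n : ℕ} (A : Matrix (Fin n) (Fin n) EReal)
    (hd : Definite A) (σ : Equiv.Perm (Fin n))
    (hσ : ∀ ρ : Equiv.Perm (Fin n), (∑ i, A i (ρ i)) ≤ ∑ i, A i (σ i)) :
    Definite (fun i j => A i (σ j) - A j (σ j)) ∧
      eig (fun i j => A i (σ j) - A j (σ j)) = eig A := by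
  have hmax : IsMaximalPerm A σ := hσ
  have hr : ∀ i, A i (σ i) = ((A i (σ i)).toReal : EReal) := fun i =>
    (EReal.coe_toReal (hmax.apply_ne_top hd i) (hmax.apply_ne_bot hd.2 i)).symm
  have horb := hmax.sum_orbitFinset_eq_zero hd hr
  exact ⟨⟨cycleBound_definiteForm hmax hr, definiteForm_apply_self hr⟩,
    eig_definiteForm hr horb hd.2⟩

end MaxPlus
end
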